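/- Let A be an (N−1) × N tw-matrix (total weight N − 1). The minimizer of the optimization problem min_{Y ∈ T} ⟨A, Y⟩_w over the weighted transportation polytope T is unique if and only if every maximal tw-minor of A is tw-nonsingular. -/

import Mathlib

/-- An ordered partition of the column set `Fin n` into blocks of sizes `m i`. -/
def IsTWPartition {M n : ℕ} (m : Fin M → ℕ) (P : Fin M → Finset (Fin n)) : Prop :=
  (∀ i, (P i).card = m i) ∧ ∀ j : Fin n, ∃! i, j ∈ P i

/-- The sum `Σ_i Σ_{j ∈ I_i} A_{ij}` associated to an ordered partition. -/
def partSum {M n : ℕ} (A : Fin M → Fin n → ℝ) (P : Fin M → Finset (Fin n)) : ℝ :=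
  ∑ i, ∑ j ∈ P i, A i j

/-- `A` is tw-singular: the minimum in the tw-permanent is attained by at least two
distinct ordered partitions. -/
def TWSingular {M n : ℕ} (m : Fin M → ℕ) (A : Fin M → Fin n → ℝ) : Prop :=
  ∃ P Q : Fin M → Finset (Fin n), IsTWPartition m P ∧ IsTWPartition m Q ∧ P ≠ Q ∧
    partSum A P = partSum A Q ∧ ∀ R, IsTWPartition m R → partSum A P ≤ partSum A R

/-- The tw-matrix obtained by deleting column `j`. -/
def minorMatrix {M K : ℕ} (A : Fin M → Fin (K + 1) → ℝ) (j : Fin (K + 1)) :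
    Fin M → Fin K → ℝ :=
  fun i k => A i (j.succAbove k)

/-- The weighted transportation polytope (M × N matrices, N = K + 1): row sums `N` and
weighted column sums `N - 1`. -/
def transPolytope {M K : ℕ} (m : Fin M → ℕ) : Set (Fin M → Fin (K + 1) → ℝ) :=
  {Y | (∀ i j, 0 ≤ Y i j) ∧ (∀ i, ∑ j, Y i j = ((K : ℝ) + 1)) ∧
    ∀ j, ∑ i, (m i : ℝ) * Y i j = (K : ℝ)}

/-- The weighted inner product `⟨A, Y⟩_w = Σ_{i,j} m_i A_{ij} Y_{ij}`. -/
def wip {M N : ℕ} (m : Fin M → ℕ) (A Y : Fin M → Fin N → ℝ) : ℝ :=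
  ∑ i, ∑ j, (m i : ℝ) * A i j * Y i j

/-!
Let `Y` be a minimizer of maximal support, a barycentre of minimizers. For two tw-partitions `P`,
`Q` avoiding the same column, the difference of their incidence matrices with row `i` scaled by
`1 / m i` is a direction of the polytope of cost `partSum A Q - partSum A P`. By Hall's theorem
every point of the polytope contains, in its support, a partition avoiding any given column.
Optimality of `Y` then shows that the partitions inside the support of `Y` are exactly the
optimal ones. So two optimal partitions give a cost-free direction along which `Y` moves to a
second minimizer. Conversely, a second minimizer pushes `Y` to a minimizer `W` vanishing at some
`(i, c)` in the support of `Y`; trading a column `γ` of row `i` for `c` in a partition inside the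
support of `W` avoiding `c` gives a partition avoiding `γ` inside the support of `Y` but not of
`W`, so the minor deleting `γ` has two optimal partitions.
-/

open Finset

section NonnegMatrices

variable {α β : Type*} [Fintype α] [Fintype β]

lemma exists_pos_add_smul_nonneg_and_eq_zero {Y D : α → β → ℝ} (hY : ∀ i j, 0 ≤ Y i j)
    (hD : ∀ i j, D i j < 0 → 0 < Y i j) (hneg : ∃ i j, D i j < 0) :
    ∃ t : ℝ, 0 < t ∧ (∀ i j, 0 ≤ (Y + t • D) i j) ∧ ∃ i j, 0 < Y i j ∧ (Y + t • D) i j = 0 := by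
  classical
  obtain ⟨i₀, j₀, hij₀⟩ := hneg
  -- the largest admissible step is the smallest ratio `Y / (-D)` over the negative entries
  obtain ⟨⟨i, j⟩, hp, hmin⟩ := (univ.filter fun p : α × β => D p.1 p.2 < 0).exists_min_image
    (fun p => Y p.1 p.2 / -D p.1 p.2) ⟨(i₀, j₀), by simpa using hij₀⟩
  simp only [mem_filter, mem_univ, true_and, Prod.forall] at hp hmin
  refine ⟨Y i j / -D i j, div_pos (hD i j hp) (neg_pos.2 hp), fun a b => ?_,
    i, j, hD i j hp, ?_⟩
  · simp only [Pi.add_apply, Pi.smul_apply, smul_eq_mul]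
    rcases lt_or_ge (D a b) 0 with hab | hab
    · have := (le_div_iff₀ (neg_pos.2 hab)).1 (hmin a b hab)
      linarith
    · have := div_nonneg (hY i j) (neg_pos.2 hp).le
      nlinarith [hY a b]
  · simp only [Pi.add_apply, Pi.smul_apply, smul_eq_mul]
    rw [div_neg, neg_mul, div_mul_cancel₀ _ hp.ne, add_neg_cancel]

lemma exists_pos_add_smul_nonneg {Y D : α → β → ℝ} (hY : ∀ i j, 0 ≤ Y i j)
    (hD : ∀ i j, D i j < 0 → 0 < Y i j) : ∃ t : ℝ, 0 < t ∧ ∀ i j, 0 ≤ (Y + t • D) i j := by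
  by_cases hneg : ∃ i j, D i j < 0
  · obtain ⟨t, ht, hnn, -⟩ := exists_pos_add_smul_nonneg_and_eq_zero hY hD hneg
    exact ⟨t, ht, hnn⟩
  · push Not at hneg
    refine ⟨1, one_pos, fun i j => ?_⟩
    simpa using add_nonneg (hY i j) (hneg i j)

lemma Convex.exists_forall_pos_imp_pos {S : Set (α → β → ℝ)} (hS : Convex ℝ S)
    (hne : S.Nonempty) (hnn : ∀ Y ∈ S, ∀ i j, 0 ≤ Y i j) :
    ∃ Yh ∈ S, ∀ Y ∈ S, ∀ i j, 0 < Y i j → 0 < Yh i j := by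
  classical
  obtain ⟨Y₀, hY₀⟩ := hne
  have hchoice : ∀ p : Option (α × β), ∃ Z ∈ S,
      ∀ q : α × β, p = some q → (∃ Y ∈ S, 0 < Y q.1 q.2) → 0 < Z q.1 q.2 := by
    rintro (_ | q)
    · exact ⟨Y₀, hY₀, by simp⟩
    · by_cases h : ∃ Y ∈ S, 0 < Y q.1 q.2
      · obtain ⟨Y, hY, hpos⟩ := h
        exact ⟨Y, hY, fun q' hq _ => by cases hq; exact hpos⟩
      · exact ⟨Y₀, hY₀, fun q' hq h' => by cases hq; exact absurd h' h⟩
  choose G hGS hGpos using hchoice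
  -- the barycentre of the chosen points is positive wherever one of them is
  set c : ℝ := (Fintype.card (Option (α × β)) : ℝ)⁻¹
  have hc : 0 < c := inv_pos.2 (Nat.cast_pos.2 Fintype.card_pos)
  have hsum : ∑ _p : Option (α × β), c = 1 := by
    rw [sum_const, card_univ, nsmul_eq_mul]
    exact mul_inv_cancel₀ (by positivity)
  refine ⟨∑ p, c • G p, hS.sum_mem (fun _ _ => hc.le) hsum fun p _ => hGS p,
    fun Y hY i j hpos => ?_⟩
  simp only [Finset.sum_apply, Pi.smul_apply, smul_eq_mul]
  exact Finset.sum_pos' (fun p _ => mul_nonneg hc.le (hnn _ (hGS p) i j))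
    ⟨some (i, j), mem_univ _, mul_pos hc (hGpos _ (i, j) rfl ⟨Y, hY, hpos⟩)⟩

end NonnegMatrices

namespace TWMatrix

variable {M N K : ℕ} {m : Fin M → ℕ}

section Circulations

variable {A : Fin M → Fin N → ℝ}

lemma wip_add (Y Z : Fin M → Fin N → ℝ) : wip m A (Y + Z) = wip m A Y + wip m A Z := by
  simp only [wip, Pi.add_apply, mul_add, sum_add_distrib]

lemma wip_smul (t : ℝ) (Y : Fin M → Fin N → ℝ) : wip m A (t • Y) = t * wip m A Y := by
  simp only [wip, Pi.smul_apply, smul_eq_mul, mul_sum]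
  exact sum_congr rfl fun _ _ => sum_congr rfl fun _ _ => by ring

lemma wip_sub (Y Z : Fin M → Fin N → ℝ) : wip m A (Y - Z) = wip m A Y - wip m A Z := by
  simp only [wip, Pi.sub_apply, mul_sub, sum_sub_distrib]

def IsCirculation (m : Fin M → ℕ) (D : Fin M → Fin N → ℝ) : Prop :=
  (∀ i, ∑ j, D i j = 0) ∧ ∀ j, ∑ i, (m i : ℝ) * D i j = 0

lemma isCirculation_sub {X Y : Fin M → Fin N → ℝ} (hrow : ∀ i, ∑ j, X i j = ∑ j, Y i j)
    (hcol : ∀ j, ∑ i, (m i : ℝ) * X i j = ∑ i, (m i : ℝ) * Y i j) : IsCirculation m (X - Y) :=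
  ⟨fun i => by simp [sum_sub_distrib, hrow i],
    fun j => by simp [mul_sub, sum_sub_distrib, hcol j]⟩

lemma IsCirculation.exists_neg {D : Fin M → Fin N → ℝ} (hD : IsCirculation m D) (hne : D ≠ 0) :
    ∃ i j, D i j < 0 := by
  by_contra! hnn
  refine hne (funext fun i => funext fun j => ?_)
  exact (sum_eq_zero_iff_of_nonneg fun j _ => hnn i j).1 (hD.1 i) j (mem_univ j)

end Circulations

lemma one_mem_transPolytope (hw : ∑ i, m i = K) :
    (fun _ _ => 1 : Fin M → Fin (K + 1) → ℝ) ∈ transPolytope m :=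
  ⟨fun _ _ => zero_le_one, fun _ => by simp, fun _ => by simp [← Nat.cast_sum, hw]⟩

lemma convex_transPolytope : Convex ℝ (transPolytope (K := K) m) := by
  rintro Y ⟨hY₀, hYrow, hYcol⟩ Z ⟨hZ₀, hZrow, hZcol⟩ a b ha hb hab
  refine ⟨fun i j => ?_, fun i => ?_, fun j => ?_⟩
  · simp only [Pi.add_apply, Pi.smul_apply, smul_eq_mul]
    exact add_nonneg (mul_nonneg ha (hY₀ i j)) (mul_nonneg hb (hZ₀ i j))
  · simp only [Pi.add_apply, Pi.smul_apply, smul_eq_mul, sum_add_distrib, ← mul_sum,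
      hYrow i, hZrow i, ← add_mul, hab, one_mul]
  · simp only [Pi.add_apply, Pi.smul_apply, smul_eq_mul, mul_add, sum_add_distrib,
      mul_left_comm (m _ : ℝ), ← mul_sum, hYcol j, hZcol j, ← add_mul, hab, one_mul]

lemma isClosed_transPolytope : IsClosed (transPolytope (K := K) m) := by
  simp only [transPolytope, Set.ofPred_and, Set.ofPred_forall]
  exact .inter (isClosed_iInter fun i => isClosed_iInter fun j =>
      isClosed_le continuous_const (by fun_prop))
    (.inter (isClosed_iInter fun i => isClosed_eq (by fun_prop) continuous_const)
      (isClosed_iInter fun j => isClosed_eq (by fun_prop) continuous_const))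

lemma transPolytope_subset_Icc :
    transPolytope (K := K) m ⊆ Set.Icc 0 (fun _ _ => (K : ℝ) + 1) :=
  fun _ ⟨hY₀, hYrow, _⟩ => ⟨fun i j => hY₀ i j, fun i j =>
    hYrow i ▸ single_le_sum (fun j _ => hY₀ i j) (mem_univ j)⟩

lemma isCompact_transPolytope : IsCompact (transPolytope (K := K) m) :=
  isCompact_Icc.of_isClosed_subset isClosed_transPolytope transPolytope_subset_Icc

lemma sub_isCirculation {Y Z : Fin M → Fin (K + 1) → ℝ} (hY : Y ∈ transPolytope m)
    (hZ : Z ∈ transPolytope m) : IsCirculation m (Y - Z) :=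
  isCirculation_sub (fun i => by rw [hY.2.1, hZ.2.1]) fun j => by rw [hY.2.2, hZ.2.2]

lemma add_smul_mem_transPolytope {Y D : Fin M → Fin (K + 1) → ℝ} (hY : Y ∈ transPolytope m)
    (hD : IsCirculation m D) {t : ℝ} (hnn : ∀ i j, 0 ≤ (Y + t • D) i j) :
    Y + t • D ∈ transPolytope m := by
  refine ⟨hnn, fun i => ?_, fun j => ?_⟩
  · simp only [Pi.add_apply, Pi.smul_apply, smul_eq_mul, sum_add_distrib, ← mul_sum, hY.2.1 i,
      hD.1 i, mul_zero, add_zero]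
  · simp only [Pi.add_apply, Pi.smul_apply, smul_eq_mul, mul_add, sum_add_distrib,
      mul_left_comm (m _ : ℝ), ← mul_sum, hY.2.2 j, hD.2 j, mul_zero, add_zero]

section Minimizers

variable {A : Fin M → Fin (K + 1) → ℝ}

def IsMinimizer (m : Fin M → ℕ) (A Y : Fin M → Fin (K + 1) → ℝ) : Prop :=
  Y ∈ transPolytope m ∧ ∀ Z ∈ transPolytope m, wip m A Y ≤ wip m A Z

lemma exists_isMinimizer (hw : ∑ i, m i = K) : ∃ Y, IsMinimizer m A Y := by
  obtain ⟨Y, hY, hmin⟩ := isCompact_transPolytope.exists_isMinOn ⟨_, one_mem_transPolytope hw⟩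
    (show Continuous (wip m A) by unfold wip; fun_prop).continuousOn
  exact ⟨Y, hY, fun Z hZ => hmin hZ⟩

lemma IsMinimizer.wip_eq {Y Z : Fin M → Fin (K + 1) → ℝ} (hY : IsMinimizer m A Y)
    (hZ : IsMinimizer m A Z) : wip m A Y = wip m A Z :=
  le_antisymm (hY.2 Z hZ.1) (hZ.2 Y hY.1)

lemma convex_setOf_isMinimizer : Convex ℝ {Y | IsMinimizer m A Y} := by
  rintro Y ⟨hYT, hY⟩ Z ⟨hZT, hZ⟩ a b ha hb hab
  refine ⟨convex_transPolytope hYT hZT ha hb hab, fun W hW => ?_⟩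
  rw [wip_add, wip_smul, wip_smul]
  calc a * wip m A Y + b * wip m A Z ≤ a * wip m A W + b * wip m A W := by
        gcongr
        exacts [hY W hW, hZ W hW]
    _ = wip m A W := by rw [← add_mul, hab, one_mul]

lemma IsMinimizer.wip_nonneg {Y D : Fin M → Fin (K + 1) → ℝ} (hY : IsMinimizer m A Y)
    (hD : IsCirculation m D) (hpos : ∀ i j, D i j < 0 → 0 < Y i j) : 0 ≤ wip m A D := by
  obtain ⟨t, ht, hnn⟩ := exists_pos_add_smul_nonneg hY.1.1 hpos
  have := hY.2 _ (add_smul_mem_transPolytope hY.1 hD hnn)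
  rw [wip_add, wip_smul] at this
  nlinarith

lemma IsMinimizer.add_smul {Y D : Fin M → Fin (K + 1) → ℝ} (hY : IsMinimizer m A Y)
    (hD : IsCirculation m D) (hwip : wip m A D = 0) {t : ℝ} (hnn : ∀ i j, 0 ≤ (Y + t • D) i j) :
    IsMinimizer m A (Y + t • D) :=
  ⟨add_smul_mem_transPolytope hY.1 hD hnn, fun Z hZ => by
    simpa [wip_add, wip_smul, hwip] using hY.2 Z hZ⟩

structure IsMaxSupportMinimizer (m : Fin M → ℕ) (A Y : Fin M → Fin (K + 1) → ℝ) : Prop where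
  isMinimizer : IsMinimizer m A Y
  pos_of_isMinimizer : ∀ Z, IsMinimizer m A Z → ∀ i j, 0 < Z i j → 0 < Y i j

lemma exists_isMaxSupportMinimizer (hw : ∑ i, m i = K) : ∃ Y, IsMaxSupportMinimizer m A Y := by
  obtain ⟨Y, hY, hmax⟩ := convex_setOf_isMinimizer.exists_forall_pos_imp_pos
    (exists_isMinimizer hw) fun Y hY => hY.1.1
  exact ⟨Y, ⟨hY, hmax⟩⟩

lemma IsMinimizer.exists_isMinimizer_eq_zero {Yh Y : Fin M → Fin (K + 1) → ℝ}
    (hYh : IsMinimizer m A Yh) (hY : IsMinimizer m A Y) (hne : Y ≠ Yh) :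
    ∃ W, IsMinimizer m A W ∧ ∃ i j, 0 < Yh i j ∧ W i j = 0 := by
  have hD := sub_isCirculation hY.1 hYh.1
  have hpos : ∀ i j, (Y - Yh) i j < 0 → 0 < Yh i j := fun i j h => by
    have := hY.1.1 i j
    simp only [Pi.sub_apply] at h
    linarith
  obtain ⟨t, -, hnn, i, j, hij, hzero⟩ := exists_pos_add_smul_nonneg_and_eq_zero hYh.1.1 hpos
    (hD.exists_neg (sub_ne_zero.2 hne))
  exact ⟨_, hYh.add_smul hD (by rw [wip_sub, hY.wip_eq hYh, sub_self]) hnn, i, j, hij, hzero⟩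

end Minimizers

section AvoidingPartitions

/-- The tw-partitions of the maximal minor deleting column `j`, read in the columns of `A`
(see `liftPartition`). -/
def IsAvoidingPartition (m : Fin M → ℕ) (j : Fin (K + 1)) (P : Fin M → Finset (Fin (K + 1))) :
    Prop :=
  (∀ i, (P i).card = m i) ∧ (∀ c, c ≠ j → ∃! i, c ∈ P i) ∧ ∀ i, j ∉ P i

lemma IsAvoidingPartition.exists_mem_notMem {j : Fin (K + 1)} {P Q : Fin M → Finset (Fin (K + 1))}
    (hP : IsAvoidingPartition m j P) (hQ : IsAvoidingPartition m j Q) (hne : P ≠ Q) :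
    ∃ i c, c ∈ Q i ∧ c ∉ P i := by
  obtain ⟨i, hi⟩ := Function.ne_iff.1 hne
  obtain ⟨c, hcQ, hcP⟩ := not_subset.1 fun h =>
    hi (eq_of_subset_of_card_le h (by rw [hP.1, hQ.1])).symm
  exact ⟨i, c, hcQ, hcP⟩

lemma IsAvoidingPartition.update_insert_erase {j γ : Fin (K + 1)}
    {P : Fin M → Finset (Fin (K + 1))} (hP : IsAvoidingPartition m j P) {i : Fin M}
    (hγ : γ ∈ P i) :
    IsAvoidingPartition m γ (Function.update P i (insert j ((P i).erase γ))) := by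
  obtain ⟨hcard, hcover, havoid⟩ := hP
  have hγj : γ ≠ j := fun h => havoid i (h ▸ hγ)
  have hmem : ∀ i' c, c ∈ Function.update P i (insert j ((P i).erase γ)) i' ↔
      (c ∈ P i' ∧ c ≠ γ) ∨ (i' = i ∧ c = j) := by
    intro i' c
    rcases eq_or_ne i' i with rfl | hi'
    · simp only [Function.update_self, mem_insert, mem_erase]
      tauto
    · simp only [Function.update_of_ne hi', hi', false_and, or_false, iff_self_and]
      intro hc hcγ
      subst hcγ
      exact hi' ((hcover _ hγj).unique hc hγ)
  refine ⟨fun i' => ?_, fun c hc => ?_, fun i' => by simp [hmem, hγj]⟩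
  · rcases eq_or_ne i' i with rfl | hi'
    · rw [Function.update_self, card_insert_of_notMem fun h => havoid i' (mem_of_mem_erase h),
        card_erase_add_one hγ, hcard]
    · rw [Function.update_of_ne hi', hcard]
  · rcases eq_or_ne c j with rfl | hcj
    · exact ⟨i, by simp, fun i' h => by simpa [hmem, havoid] using h⟩
    · obtain ⟨i₀, hi₀, huniq⟩ := hcover c hcj
      exact ⟨i₀, by simp [hmem, hi₀, hc], fun i' h =>
        huniq i' (((hmem i' c).1 h).resolve_right fun h' => hcj h'.2).1⟩

noncomputable def scaledIncidence (m : Fin M → ℕ) (P : Fin M → Finset (Fin (K + 1))) :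
    Fin M → Fin (K + 1) → ℝ :=
  fun i c => if c ∈ P i then (m i : ℝ)⁻¹ else 0

variable (hm : ∀ i, 0 < m i) {j : Fin (K + 1)} {P Q : Fin M → Finset (Fin (K + 1))}
include hm

lemma sum_mul_scaledIncidence (hP : IsAvoidingPartition m j P) (c : Fin (K + 1)) :
    ∑ i, (m i : ℝ) * scaledIncidence m P i c = if c = j then 0 else 1 := by
  split_ifs with hc
  · subst hc
    exact sum_eq_zero fun i _ => by simp [scaledIncidence, hP.2.2 i]
  · obtain ⟨i₀, hi₀, huniq⟩ := hP.2.1 c hc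
    have hnot : ∀ i ≠ i₀, c ∉ P i := fun i hi h => hi (huniq i h)
    rw [sum_eq_single i₀ (fun i _ hi => by simp [scaledIncidence, hnot i hi]) (by simp)]
    simp [scaledIncidence, hi₀, (hm i₀).ne']

lemma wip_scaledIncidence (A : Fin M → Fin (K + 1) → ℝ) (P : Fin M → Finset (Fin (K + 1))) :
    wip m A (scaledIncidence m P) = partSum A P := by
  refine sum_congr rfl fun i _ => ?_
  simp only [scaledIncidence, mul_ite, mul_zero, sum_ite_mem, univ_inter]
  exact sum_congr rfl fun c _ => by field_simp [(hm i).ne']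

lemma isCirculation_scaledIncidence_sub (hP : IsAvoidingPartition m j P)
    (hQ : IsAvoidingPartition m j Q) :
    IsCirculation m (scaledIncidence m Q - scaledIncidence m P) :=
  isCirculation_sub (fun i => by simp [scaledIncidence, sum_ite_mem, hP.1, hQ.1])
    fun c => by rw [sum_mul_scaledIncidence hm hP, sum_mul_scaledIncidence hm hQ]

end AvoidingPartitions

section Hall

lemma exists_isAvoidingPartition_of_hall (hw : ∑ i, m i = K) (r : Fin M → Fin (K + 1) → Prop)
    [∀ i c, Decidable (r i c)] (j : Fin (K + 1))
    (hall : ∀ s : Finset (Fin (K + 1)), j ∉ s →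
      s.card ≤ ∑ i ∈ univ.filter (fun i => ∃ c ∈ s, r i c), m i) :
    ∃ P, IsAvoidingPartition m j P ∧ ∀ i, ∀ c ∈ P i, r i c := by
  classical
  -- match the columns `c ≠ j` injectively into the slots `(i, k)`, `k < m i`, of adjacent rows
  let t : {c // c ≠ j} → Finset (Σ i, Fin (m i)) := fun c => univ.filter fun p => r p.1 c
  have hcard : ∀ s : Finset {c // c ≠ j}, s.card ≤ (s.biUnion t).card := fun s => by
    have hs : s.biUnion t = (univ.filter fun i => ∃ c ∈ s.map (Function.Embedding.subtype _),
        r i c).sigma fun _ => univ := by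
      ext ⟨i, k⟩
      simp [t]
    rw [hs, card_sigma]
    simpa using hall (s.map (Function.Embedding.subtype _)) (by simp)
  obtain ⟨f, hf, hft⟩ := (all_card_le_biUnion_card_iff_exists_injective t).1 hcard
  -- there are as many slots as columns, so the matching is perfect
  let e := Equiv.ofBijective f ((Fintype.bijective_iff_injective_and_card f).2 ⟨hf, by
    simp [Fintype.card_subtype_compl, hw]⟩)
  let slot (i : Fin M) : Fin (m i) ↪ Fin (K + 1) :=
    (Function.Embedding.sigmaMk i).trans (e.symm.toEmbedding.trans (.subtype _))
  have hmem : ∀ i c, c ∈ univ.map (slot i) ↔ ∃ k, (e.symm ⟨i, k⟩ : Fin (K + 1)) = c := by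
    simp [slot]
  refine ⟨fun i => univ.map (slot i), ⟨fun i => by simp, fun c hc => ⟨(e ⟨c, hc⟩).1, ?_, ?_⟩,
    fun i hj => ?_⟩, fun i c hc => ?_⟩
  · exact (hmem _ _).2 ⟨(e ⟨c, hc⟩).2, by simp⟩
  · intro i hi
    obtain ⟨k, hk⟩ := (hmem i c).1 hi
    have : e.symm ⟨i, k⟩ = ⟨c, hc⟩ := Subtype.ext hk
    simp [← this]
  · obtain ⟨k, hk⟩ := (hmem i j).1 hj
    exact (e.symm ⟨i, k⟩).2 hk
  · obtain ⟨k, rfl⟩ := (hmem i c).1 hc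
    have := hft (e.symm ⟨i, k⟩)
    rw [show f (e.symm ⟨i, k⟩) = ⟨i, k⟩ from e.apply_symm_apply _] at this
    simpa [t] using this

/-- The mass `K * #s` of the columns in `s` sits in the rows meeting them, each of mass
`(K + 1) * m i`. -/
lemma card_le_sum_of_mem_transPolytope {Y : Fin M → Fin (K + 1) → ℝ} (hY : Y ∈ transPolytope m)
    {s : Finset (Fin (K + 1))} (hs : s.card ≤ K) :
    s.card ≤ ∑ i ∈ univ.filter (fun i => ∃ c ∈ s, 0 < Y i c), m i := by
  set N := univ.filter fun i => ∃ c ∈ s, 0 < Y i c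
  have hmass : (K : ℝ) * s.card ≤ ((K : ℝ) + 1) * ∑ i ∈ N, (m i : ℝ) :=
    calc (K : ℝ) * s.card = ∑ c ∈ s, ∑ i, (m i : ℝ) * Y i c := by
          rw [sum_congr rfl fun c _ => hY.2.2 c, sum_const, nsmul_eq_mul, mul_comm]
      _ = ∑ c ∈ s, ∑ i ∈ N, (m i : ℝ) * Y i c := by
          refine sum_congr rfl fun c hc => (sum_subset (subset_univ N) fun i _ hi => ?_).symm
          simp only [N, mem_filter, mem_univ, true_and, not_exists, not_and, not_lt] at hi
          rw [le_antisymm (hi c hc) (hY.1 i c), mul_zero]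
      _ = ∑ i ∈ N, (m i : ℝ) * ∑ c ∈ s, Y i c := by
          rw [sum_comm]
          simp only [mul_sum]
      _ ≤ ∑ i ∈ N, (m i : ℝ) * ((K : ℝ) + 1) := by
          gcongr with i
          exact hY.2.1 i ▸ sum_le_univ_sum_of_nonneg fun c => hY.1 i c
      _ = ((K : ℝ) + 1) * ∑ i ∈ N, (m i : ℝ) := by rw [mul_sum]; simp only [mul_comm]
  have : K * s.card ≤ (K + 1) * ∑ i ∈ N, m i := by exact_mod_cast hmass
  by_contra! hlt
  nlinarith

lemma exists_isAvoidingPartition_of_mem_transPolytope (hw : ∑ i, m i = K)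
    {Y : Fin M → Fin (K + 1) → ℝ} (hY : Y ∈ transPolytope m) (j : Fin (K + 1)) :
    ∃ P, IsAvoidingPartition m j P ∧ ∀ i, ∀ c ∈ P i, 0 < Y i c :=
  exists_isAvoidingPartition_of_hall hw _ j fun s hs =>
    card_le_sum_of_mem_transPolytope hY <| by
      simpa using card_le_card (subset_erase.2 ⟨subset_univ s, hs⟩)

end Hall

section Minors

def liftPartition (j : Fin (K + 1)) (P : Fin M → Finset (Fin K)) : Fin M → Finset (Fin (K + 1)) :=
  fun i => (P i).map (Fin.succAboveEmb j)

variable {j : Fin (K + 1)}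

lemma mem_liftPartition {P : Fin M → Finset (Fin K)} {i : Fin M} {c : Fin (K + 1)} :
    c ∈ liftPartition j P i ↔ ∃ z ∈ P i, j.succAbove z = c := by
  simp [liftPartition]

lemma liftPartition_injective : Function.Injective (liftPartition (M := M) j) :=
  fun _ _ h => funext fun i => map_injective _ (congrFun h i)

lemma IsTWPartition.isAvoidingPartition_liftPartition {P : Fin M → Finset (Fin K)}
    (hP : IsTWPartition m P) : IsAvoidingPartition m j (liftPartition j P) := by
  refine ⟨fun i => by rw [liftPartition, card_map, hP.1], fun c hc => ?_, fun i hi => ?_⟩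
  · obtain ⟨z, rfl⟩ := Fin.exists_succAbove_eq hc
    simpa [mem_liftPartition] using hP.2 z
  · obtain ⟨z, -, hz⟩ := mem_liftPartition.1 hi
    exact Fin.succAbove_ne j z hz

lemma IsAvoidingPartition.exists_liftPartition_eq {Q : Fin M → Finset (Fin (K + 1))}
    (hQ : IsAvoidingPartition m j Q) : ∃ P, IsTWPartition m P ∧ liftPartition j P = Q := by
  classical
  have hlift : liftPartition j (fun i => univ.filter fun z => j.succAbove z ∈ Q i) = Q := by
    refine funext fun i => ext fun c => ⟨fun hc => ?_, fun hc => ?_⟩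
    · obtain ⟨z, hz, rfl⟩ := mem_liftPartition.1 hc
      simpa using hz
    · obtain ⟨z, rfl⟩ := Fin.exists_succAbove_eq fun h : c = j => hQ.2.2 i (h ▸ hc)
      exact mem_liftPartition.2 ⟨z, by simpa using hc, rfl⟩
  refine ⟨_, ⟨fun i => ?_, fun z => ?_⟩, hlift⟩
  · have := congrArg card (congrFun hlift i)
    rwa [liftPartition, card_map, hQ.1] at this
  · simpa using hQ.2.1 (j.succAbove z) (Fin.succAbove_ne j z)

lemma partSum_minorMatrix (A : Fin M → Fin (K + 1) → ℝ) (P : Fin M → Finset (Fin K)) :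
    partSum (minorMatrix A j) P = partSum A (liftPartition j P) :=
  sum_congr rfl fun i _ => (sum_map (P i) (Fin.succAboveEmb j) _).symm

lemma twSingular_minorMatrix_iff {A : Fin M → Fin (K + 1) → ℝ} :
    TWSingular m (minorMatrix A j) ↔
      ∃ P Q, IsAvoidingPartition m j P ∧ IsAvoidingPartition m j Q ∧ P ≠ Q ∧
        partSum A P = partSum A Q ∧ ∀ R, IsAvoidingPartition m j R → partSum A P ≤ partSum A R := by
  constructor
  · rintro ⟨P, Q, hP, hQ, hne, heq, hmin⟩
    refine ⟨_, _, IsTWPartition.isAvoidingPartition_liftPartition hP,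
      IsTWPartition.isAvoidingPartition_liftPartition hQ, liftPartition_injective.ne hne,
      by simpa [partSum_minorMatrix] using heq, fun R hR => ?_⟩
    obtain ⟨R', hR', rfl⟩ := hR.exists_liftPartition_eq
    simpa [partSum_minorMatrix] using hmin R' hR'
  · rintro ⟨P, Q, hP, hQ, hne, heq, hmin⟩
    obtain ⟨P', hP', rfl⟩ := hP.exists_liftPartition_eq
    obtain ⟨Q', hQ', rfl⟩ := hQ.exists_liftPartition_eq
    exact ⟨P', Q', hP', hQ', fun h => hne (congrArg _ h),
      by simpa [partSum_minorMatrix] using heq, fun R hR => by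
        simpa [partSum_minorMatrix] using
          hmin _ (IsTWPartition.isAvoidingPartition_liftPartition hR)⟩

end Minors

section Uniqueness

variable {A Y : Fin M → Fin (K + 1) → ℝ} {j : Fin (K + 1)} {P R : Fin M → Finset (Fin (K + 1))}

lemma mem_of_scaledIncidence_sub_neg {i : Fin M} {c : Fin (K + 1)}
    (h : (scaledIncidence m R - scaledIncidence m P) i c < 0) : c ∈ P i := by
  by_contra hcP
  simp only [Pi.sub_apply, scaledIncidence, hcP, if_false, sub_zero] at h
  have : (0 : ℝ) ≤ (m i : ℝ)⁻¹ := by positivity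
  split_ifs at h <;> linarith

lemma add_smul_scaledIncidence_sub_apply {t : ℝ} {i : Fin M} {c : Fin (K + 1)} (hcR : c ∈ R i)
    (hcP : c ∉ P i) :
    (Y + t • (scaledIncidence m R - scaledIncidence m P)) i c = Y i c + t * (m i : ℝ)⁻¹ := by
  simp [scaledIncidence, hcR, hcP]

variable (hm : ∀ i, 0 < m i)
include hm

lemma IsMinimizer.partSum_le (hY : IsMinimizer m A Y) (hP : IsAvoidingPartition m j P)
    (hPY : ∀ i, ∀ c ∈ P i, 0 < Y i c) (hR : IsAvoidingPartition m j R) :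
    partSum A P ≤ partSum A R := by
  have := hY.wip_nonneg (isCirculation_scaledIncidence_sub hm hP hR) fun i c h =>
    hPY i c (mem_of_scaledIncidence_sub_neg h)
  rwa [wip_sub, wip_scaledIncidence hm, wip_scaledIncidence hm, sub_nonneg] at this

lemma IsMinimizer.twSingular_minorMatrix (hY : IsMinimizer m A Y) {Q : Fin M → Finset (Fin (K + 1))}
    (hP : IsAvoidingPartition m j P) (hQ : IsAvoidingPartition m j Q) (hne : P ≠ Q)
    (hPY : ∀ i, ∀ c ∈ P i, 0 < Y i c) (hQY : ∀ i, ∀ c ∈ Q i, 0 < Y i c) :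
    TWSingular m (minorMatrix A j) :=
  twSingular_minorMatrix_iff.2 ⟨P, Q, hP, hQ, hne,
    le_antisymm (hY.partSum_le hm hP hPY hQ) (hY.partSum_le hm hQ hQY hP),
    fun _ hR => hY.partSum_le hm hP hPY hR⟩

lemma IsMinimizer.exists_isMinimizer_add_smul (hY : IsMinimizer m A Y)
    (hP : IsAvoidingPartition m j P) (hPY : ∀ i, ∀ c ∈ P i, 0 < Y i c)
    (hR : IsAvoidingPartition m j R) (heq : partSum A P = partSum A R) :
    ∃ t : ℝ, 0 < t ∧ IsMinimizer m A (Y + t • (scaledIncidence m R - scaledIncidence m P)) := by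
  obtain ⟨t, ht, hnn⟩ := exists_pos_add_smul_nonneg hY.1.1 fun i c h =>
    hPY i c (mem_of_scaledIncidence_sub_neg h)
  refine ⟨t, ht, hY.add_smul (isCirculation_scaledIncidence_sub hm hP hR) ?_ hnn⟩
  rw [wip_sub, wip_scaledIncidence hm, wip_scaledIncidence hm, heq, sub_self]

lemma IsMaxSupportMinimizer.pos_of_partSum_eq (hY : IsMaxSupportMinimizer m A Y)
    (hP : IsAvoidingPartition m j P) (hPY : ∀ i, ∀ c ∈ P i, 0 < Y i c)
    (hR : IsAvoidingPartition m j R) (heq : partSum A P = partSum A R) :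
    ∀ i, ∀ c ∈ R i, 0 < Y i c := by
  obtain ⟨t, ht, hY'⟩ := hY.isMinimizer.exists_isMinimizer_add_smul hm hP hPY hR heq
  intro i c hcR
  by_cases hcP : c ∈ P i
  · exact hPY i c hcP
  · refine hY.pos_of_isMinimizer _ hY' i c ?_
    rw [add_smul_scaledIncidence_sub_apply hcR hcP]
    positivity [hY.isMinimizer.1.1 i c, hm i]

lemma IsMaxSupportMinimizer.exists_ne_of_twSingular (hw : ∑ i, m i = K)
    (hY : IsMaxSupportMinimizer m A Y) (h : TWSingular m (minorMatrix A j)) :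
    ∃ Z, IsMinimizer m A Z ∧ Z ≠ Y := by
  obtain ⟨P, Q, hP, hQ, hne, heq, hmin⟩ := twSingular_minorMatrix_iff.1 h
  obtain ⟨P₀, hP₀, hP₀Y⟩ := exists_isAvoidingPartition_of_mem_transPolytope hw hY.isMinimizer.1 j
  have hPY := hY.pos_of_partSum_eq hm hP₀ hP₀Y hP
    (le_antisymm (hY.isMinimizer.partSum_le hm hP₀ hP₀Y hP) (hmin P₀ hP₀))
  obtain ⟨i, c, hcQ, hcP⟩ := hP.exists_mem_notMem hQ hne
  obtain ⟨t, ht, hZ⟩ := hY.isMinimizer.exists_isMinimizer_add_smul hm hP hPY hQ heq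
  refine ⟨_, hZ, fun h => ?_⟩
  have := congrFun (congrFun h i) c
  rw [add_smul_scaledIncidence_sub_apply hcQ hcP, add_eq_left] at this
  exact (mul_pos ht (inv_pos.2 (Nat.cast_pos.2 (hm i)))).ne' this

lemma IsMaxSupportMinimizer.exists_twSingular_of_eq_zero (hw : ∑ i, m i = K)
    (hY : IsMaxSupportMinimizer m A Y) {W : Fin M → Fin (K + 1) → ℝ} (hW : IsMinimizer m A W)
    {i : Fin M} {c : Fin (K + 1)} (hYic : 0 < Y i c) (hWic : W i c = 0) :
    ∃ γ, TWSingular m (minorMatrix A γ) := by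
  have hWY := hY.pos_of_isMinimizer W hW
  obtain ⟨P, hP, hPW⟩ := exists_isAvoidingPartition_of_mem_transPolytope hw hW.1 c
  obtain ⟨γ, hγ⟩ : (P i).Nonempty := card_pos.1 (hP.1 i ▸ hm i)
  obtain ⟨Pγ, hPγ, hPγW⟩ := exists_isAvoidingPartition_of_mem_transPolytope hw hW.1 γ
  -- trading `γ` for `c` in row `i` of `P` gives a second partition avoiding `γ`, inside the
  -- support of `Y` but, unlike `Pγ`, not inside that of `W`
  refine ⟨γ, hY.isMinimizer.twSingular_minorMatrix hm hPγ (hP.update_insert_erase hγ)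
    (fun h => ?_) (fun i' c' hc' => hWY i' c' (hPγW i' c' hc')) fun i' c' hc' => ?_⟩
  · have := hPγW i c (h ▸ by simp)
    linarith
  · rcases eq_or_ne i' i with rfl | hi'
    · simp only [Function.update_self, mem_insert, mem_erase] at hc'
      rcases hc' with rfl | ⟨-, hc'⟩
      exacts [hYic, hWY _ _ (hPW _ _ hc')]
    · rw [Function.update_of_ne hi'] at hc'
      exact hWY _ _ (hPW _ _ hc')

end Uniqueness

end TWMatrix

/-- For an `(N-1) × N` tw-matrix `A` (total weight `N - 1`), the minimizer of
`⟨A, ·⟩_w` over the weighted transportation polytope is unique iff every maximal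
tw-minor of `A` is tw-nonsingular. -/
theorem unique_minimizer_transPolytope_iff {M K : ℕ} (m : Fin M → ℕ)
    (hm : ∀ i, 1 ≤ m i) (hw : ∑ i, m i = K) (A : Fin M → Fin (K + 1) → ℝ) :
    (∃! Y, Y ∈ transPolytope (M := M) (K := K) m ∧
        ∀ Z ∈ transPolytope (M := M) (K := K) m, wip m A Y ≤ wip m A Z) ↔
      ∀ j : Fin (K + 1), ¬ TWSingular m (minorMatrix A j) := by
  obtain ⟨Y, hY⟩ := TWMatrix.exists_isMaxSupportMinimizer (A := A) hw
  change (∃! Y, TWMatrix.IsMinimizer m A Y) ↔ _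
  constructor
  · rintro ⟨_, -, huniq⟩ j hsing
    obtain ⟨Z, hZ, hZY⟩ := hY.exists_ne_of_twSingular hm hw hsing
    exact hZY ((huniq Z hZ).trans (huniq Y hY.isMinimizer).symm)
  · refine fun hns => ⟨Y, hY.isMinimizer, fun Z hZ => by_contra fun hZY => ?_⟩
    obtain ⟨W, hW, i, c, hYic, hWic⟩ := hY.isMinimizer.exists_isMinimizer_eq_zero hZ hZY
    obtain ⟨γ, hγ⟩ := hY.exists_twSingular_of_eq_zero hm hw hW hYic hWic
    exact hns γ hγ
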